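/- Let d ≥ 2, m > 6 and i, j ∈ ℤ^d with ‖i − j‖_∞ ≥ 5. Then for every ℓ₁ ∈ A(K_i^m) ∩ ℤ^d and every ℓ₂ ∈ A(K_j^m) ∩ ℤ^d, the discrete balls B_{ℓ₁}(m/6) and B_{ℓ₂}(m/6) are disjoint. -/

import Mathlib

open MeasureTheory
open scoped ENNReal NNReal

noncomputable section

/-- The level-`m` cube `K_i^m` in `ℝ^d`:
`K_i^m = {x : |x^(l) - m·i^(l)| ≤ m/2 for all l}`. -/
def cube (d : ℕ) (m : ℝ) (i : Fin d → ℤ) : Set (EuclideanSpace ℝ (Fin d)) :=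
  {x | ∀ l, |x l - m * (i l : ℝ)| ≤ m / 2}

/-- The distance `ρ(A,B) = inf {|x - y| : x ∈ A, y ∈ B}` between two sets. -/
def rho (d : ℕ) (A B : Set (EuclideanSpace ℝ (Fin d))) : ℝ :=
  sInf (Set.image2 dist A B)

/-- The discrete ball `B_i(r)`: the union of the level-1 cubes `K_j^1` with
`ρ(K_i^1, K_j^1) ≤ r` (and `B_i(0) = ∅`). -/
def dball (d : ℕ) (i : Fin d → ℤ) (r : ℝ) : Set (EuclideanSpace ℝ (Fin d)) :=
  if 0 < r then
    ⋃ j ∈ {j : Fin d → ℤ | rho d (cube d 1 i) (cube d 1 j) ≤ r}, cube d 1 j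
  else ∅

/-- `π_d`, the Lebesgue volume of the unit Euclidean ball in `ℝ^d`. -/
def unitBallVol (d : ℕ) : ℝ :=
  (volume (Metric.ball (0 : EuclideanSpace ℝ (Fin d)) 1)).toReal

/-- `β_d = ⌈3 + 2√d · π_d^(1/d)⌉`. -/
def betaD (d : ℕ) : ℝ :=
  (⌈3 + 2 * Real.sqrt d * (unitBallVol d) ^ ((1 : ℝ) / d)⌉ : ℤ)

/-- The embedding of `ℤ^d` into `ℝ^d`. -/
def embedZ (d : ℕ) (i : Fin d → ℤ) : EuclideanSpace ℝ (Fin d) :=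
  WithLp.toLp 2 (fun l => (i l : ℝ))

/-- `A(K_j^m)`: the union of `K_j^m` with its `3^d - 1` neighbouring level-`m`
cubes, i.e. the cubes `K_i^m` with `‖i - j‖_∞ ≤ 1`. -/
def nbhd (d : ℕ) (m : ℝ) (j : Fin d → ℤ) : Set (EuclideanSpace ℝ (Fin d)) :=
  ⋃ i ∈ {i : Fin d → ℤ | ‖i - j‖ ≤ 1}, cube d m i

/-- The radius `R_i(ζ) = inf {r > 0 : Σ_{j : ρ(K_j^1,K_i^1) ≤ β_d r} ζ(j) ≤ π_d r^d}`
if `ζ i > 0` (with `inf ∅ = +∞`, so the value is taken in `ℝ≥0∞`), and `R_i(ζ) = 0`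
if `ζ i = 0`. -/
def Rad (d : ℕ) (ζ : (Fin d → ℤ) → ℕ) (i : Fin d → ℤ) : ℝ≥0∞ :=
  if ζ i = 0 then 0
  else sInf {t : ℝ≥0∞ | ∃ r : ℝ, 0 < r ∧ t = ENNReal.ofReal r ∧
    ((∑ᶠ j ∈ {j : Fin d → ℤ |
        rho d (cube d 1 j) (cube d 1 i) ≤ betaD d * r}, ζ j : ℕ) : ℝ)
      ≤ unitBallVol d * r ^ d}

/-- The sup norm `‖x‖_∞` on `ℝ^d`. -/
def supNorm (d : ℕ) (x : EuclideanSpace ℝ (Fin d)) : ℝ := ⨆ l, |x l|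

/-!
Choose a coordinate `l` with `|i l - j l| ≥ 5`. Every point of `A(K_i^m)` has
`l`-th coordinate within `3m/2` of `m · i l`, and every point of `B_ℓ(r)` has `l`-th coordinate
within `r + 3/2` of `ℓ l`. A common point of the two balls would therefore give
`5m ≤ 3m + 2 (m/6 + 3/2)`, i.e. `m ≤ 9/5`.
-/

lemma embedZ_mem_cube (d : ℕ) (a : Fin d → ℤ) : embedZ d a ∈ cube d 1 a := by
  intro l
  simp [embedZ]

lemma abs_apply_sub_sub_one_le_rho_cube (d : ℕ) (a b : Fin d → ℤ) (l : Fin d) :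
    |(a l : ℝ) - b l| - 1 ≤ rho d (cube d 1 a) (cube d 1 b) := by
  refine le_csInf ⟨_, Set.mem_image2_of_mem (embedZ_mem_cube d a) (embedZ_mem_cube d b)⟩ ?_
  rintro _ ⟨x, hx, y, hy, rfl⟩
  have hxa : |(a l : ℝ) - x l| ≤ 1 / 2 := by simpa [abs_sub_comm] using hx l
  have hyb : |y l - b l| ≤ 1 / 2 := by simpa using hy l
  have hxy : |x l - y l| ≤ dist x y := by simpa [Real.dist_eq] using PiLp.dist_apply_le x y l
  have := dist_triangle4 (a l : ℝ) (x l) (y l) (b l)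
  simp only [Real.dist_eq] at this
  linarith

lemma abs_apply_sub_le_of_mem_dball {d : ℕ} {a : Fin d → ℤ} {r : ℝ}
    {x : EuclideanSpace ℝ (Fin d)} (hx : x ∈ dball d a r) (l : Fin d) :
    |x l - a l| ≤ r + 3 / 2 := by
  unfold dball at hx
  split_ifs at hx
  · simp only [Set.mem_iUnion, Set.mem_ofPred_eq] at hx
    obtain ⟨b, hab, hxb⟩ := hx
    have hxb : |x l - b l| ≤ 1 / 2 := by simpa using hxb l
    have hba : |(b l : ℝ) - a l| - 1 ≤ r := by
      rw [abs_sub_comm]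
      exact (abs_apply_sub_sub_one_le_rho_cube d a b l).trans hab
    linarith [abs_sub_le (x l) (b l) (a l)]
  · exact absurd hx (Set.notMem_empty x)

lemma abs_apply_sub_le_of_mem_nbhd {d : ℕ} {m : ℝ} (hm : 0 ≤ m) {i : Fin d → ℤ}
    {x : EuclideanSpace ℝ (Fin d)} (hx : x ∈ nbhd d m i) (l : Fin d) :
    |x l - m * i l| ≤ 3 * m / 2 := by
  simp only [nbhd, Set.mem_iUnion, Set.mem_ofPred_eq] at hx
  obtain ⟨k, hki, hxk⟩ := hx
  have hkl : |(k l : ℝ) - i l| ≤ 1 := by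
    simpa [Int.norm_eq_abs] using (norm_le_pi_norm (k - i) l).trans hki
  calc |x l - m * i l| = |(x l - m * k l) + m * (k l - i l)| := by ring_nf
    _ ≤ |x l - m * k l| + m * |(k l : ℝ) - i l| :=
      (abs_add_le _ _).trans_eq (by rw [abs_mul, abs_of_nonneg hm])
    _ ≤ m / 2 + m * 1 := add_le_add (hxk l) (mul_le_mul_of_nonneg_left hkl hm)
    _ = 3 * m / 2 := by ring

lemma exists_le_abs_apply_sub_of_le_norm {d : ℕ} {i j : Fin d → ℤ} {r : ℝ} (hr : 0 < r)
    (h : r ≤ ‖i - j‖) : ∃ l, r ≤ |(i l : ℝ) - j l| := by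
  have := mt (pi_norm_lt_iff hr).2 h.not_gt
  push Not at this
  simpa [Int.norm_eq_abs] using this

theorem statement10_general (d : ℕ) (m : ℝ) (hm : 6 < m)
    (i j : Fin d → ℤ) (hij : 5 ≤ ‖i - j‖)
    (ℓ₁ ℓ₂ : Fin d → ℤ)
    (h1 : embedZ d ℓ₁ ∈ nbhd d m i) (h2 : embedZ d ℓ₂ ∈ nbhd d m j) :
    Disjoint (dball d ℓ₁ (m / 6)) (dball d ℓ₂ (m / 6)) := by
  obtain ⟨l, hl⟩ := exists_le_abs_apply_sub_of_le_norm (by norm_num) hij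
  rw [Set.disjoint_left]
  intro x hx₁ hx₂
  have hiℓ₁ : |m * i l - ℓ₁ l| ≤ 3 * m / 2 := by
    simpa [abs_sub_comm, embedZ] using abs_apply_sub_le_of_mem_nbhd (by linarith) h1 l
  have hℓ₂j : |(ℓ₂ l : ℝ) - m * j l| ≤ 3 * m / 2 := by
    simpa [embedZ] using abs_apply_sub_le_of_mem_nbhd (by linarith) h2 l
  have hℓ₁x : |(ℓ₁ l : ℝ) - x l| ≤ m / 6 + 3 / 2 := by
    simpa [abs_sub_comm] using abs_apply_sub_le_of_mem_dball hx₁ l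
  have hxℓ₂ : |x l - ℓ₂ l| ≤ m / 6 + 3 / 2 := abs_apply_sub_le_of_mem_dball hx₂ l
  have hsep : m * 5 ≤ |m * i l - m * j l| := by
    rw [← mul_sub, abs_mul, abs_of_pos (by linarith)]
    exact mul_le_mul_of_nonneg_left hl (by linarith)
  have hchain : |m * i l - m * j l| ≤
      |m * i l - ℓ₁ l| + |(ℓ₁ l : ℝ) - x l| + |x l - ℓ₂ l| + |(ℓ₂ l : ℝ) - m * j l| := by
    have := dist_triangle4 (m * (i l : ℝ)) (ℓ₁ l) (x l) (ℓ₂ l)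
    rw [Real.dist_eq, Real.dist_eq, Real.dist_eq, Real.dist_eq] at this
    linarith [abs_sub_le (m * (i l : ℝ)) (ℓ₂ l) (m * j l)]
  linarith

/-- Let `d ≥ 2`, `m > 6` and `i, j ∈ ℤ^d` with `‖i − j‖_∞ ≥ 5`.
Then for every `ℓ₁ ∈ A(K_i^m) ∩ ℤ^d` and every `ℓ₂ ∈ A(K_j^m) ∩ ℤ^d`, the
discrete balls `B_{ℓ₁}(m/6)` and `B_{ℓ₂}(m/6)` are disjoint. -/
theorem statement10 (d : ℕ) (hd : 2 ≤ d) (m : ℝ) (hm : 6 < m)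
    (i j : Fin d → ℤ) (hij : 5 ≤ ‖i - j‖)
    (ℓ₁ ℓ₂ : Fin d → ℤ)
    (h1 : embedZ d ℓ₁ ∈ nbhd d m i) (h2 : embedZ d ℓ₂ ∈ nbhd d m j) :
    Disjoint (dball d ℓ₁ (m / 6)) (dball d ℓ₂ (m / 6)) :=
  statement10_general d m hm i j hij ℓ₁ ℓ₂ h1 h2
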